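/- The function H(x,y,z) = (x/y)·e^{y(y+1)/x} is a first integral of the vector field Y = x(x − 2y² − y) ∂/∂x + y(x − y² − y) ∂/∂y − z(x − y² − y) ∂/∂z on the open set {x ≠ 0, y ≠ 0}; that is, the derivative of H along Y vanishes at every point with x ≠ 0 and y ≠ 0. -/

import Mathlib

/-!
Where `x, y ≠ 0`, `log H = log x - log y + (y² + y)/x`, so the derivative of `H` along `v` is `H`
times `v₁/x - v₂/y + ((2y + 1) v₂ x - (y² + y) v₁)/x²`. For `v = Y` the first two terms sum to
`(x - 2y² - y) - (x - y² - y) = -y²`, and the last one is `x y²/x = y²`.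
-/

open Complex

theorem HasDerivAt.div_mul_cexp_div {a b c : ℂ → ℂ} {a' b' c' t : ℂ}
    (ha : HasDerivAt a a' t) (hb : HasDerivAt b b' t) (hc : HasDerivAt c c' t)
    (ha0 : a t ≠ 0) (hb0 : b t ≠ 0) :
    HasDerivAt (fun s => a s / b s * Complex.exp (c s / a s))
      (a t / b t * Complex.exp (c t / a t) *
        (a' / a t - b' / b t + (c' * a t - c t * a') / a t ^ 2)) t := by
  refine ((ha.fun_div hb hb0).fun_mul (hc.fun_div ha ha0).cexp).congr_deriv ?_
  field_simp

namespace FirstIntegral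

noncomputable def H (p : ℂ × ℂ × ℂ) : ℂ := p.1 / p.2.1 * exp ((p.2.1 ^ 2 + p.2.1) / p.1)

def Y (p : ℂ × ℂ × ℂ) : ℂ × ℂ × ℂ :=
  (p.1 * (p.1 - 2 * p.2.1 ^ 2 - p.2.1), p.2.1 * (p.1 - p.2.1 ^ 2 - p.2.1),
    -(p.2.2 * (p.1 - p.2.1 ^ 2 - p.2.1)))

theorem differentiableAt_H {p : ℂ × ℂ × ℂ} (hx : p.1 ≠ 0) (hy : p.2.1 ≠ 0) :
    DifferentiableAt ℂ H p := by
  unfold H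
  fun_prop (disch := assumption)

theorem hasLineDerivAt_H {p v : ℂ × ℂ × ℂ} (hx : p.1 ≠ 0) (hy : p.2.1 ≠ 0) :
    HasLineDerivAt ℂ H (H p * (v.1 / p.1 - v.2.1 / p.2.1
      + ((2 * p.2.1 + 1) * v.2.1 * p.1 - (p.2.1 ^ 2 + p.2.1) * v.1) / p.1 ^ 2)) p v := by
  have hx' : HasDerivAt (fun t : ℂ => p.1 + t * v.1) v.1 0 := by
    simpa using ((hasDerivAt_id (0 : ℂ)).mul_const v.1).const_add p.1
  have hy' : HasDerivAt (fun t : ℂ => p.2.1 + t * v.2.1) v.2.1 0 := by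
    simpa using ((hasDerivAt_id (0 : ℂ)).mul_const v.2.1).const_add p.2.1
  have hline := hx'.div_mul_cexp_div hy' ((hy'.fun_pow 2).fun_add hy') (by simpa) (by simpa)
  have hH : (fun t : ℂ => H (p + t • v)) = fun t =>
      (p.1 + t * v.1) / (p.2.1 + t * v.2.1)
        * exp (((p.2.1 + t * v.2.1) ^ 2 + (p.2.1 + t * v.2.1)) / (p.1 + t * v.1)) := by
    funext t
    simp [H]
  rw [HasLineDerivAt, hH]
  refine hline.congr_deriv ?_
  simp only [H, zero_mul, add_zero, Nat.cast_ofNat]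
  ring

theorem hasLineDerivAt_H_Y {p : ℂ × ℂ × ℂ} (hx : p.1 ≠ 0) (hy : p.2.1 ≠ 0) :
    HasLineDerivAt ℂ H 0 p (Y p) := by
  convert hasLineDerivAt_H (v := Y p) hx hy using 1
  simp only [Y]
  field_simp
  ring

end FirstIntegral

open FirstIntegral in
/-- H(x,y,z) = (x/y)·e^{y(y+1)/x} is a first integral of
Y = x(x−2y²−y) ∂/∂x + y(x−y²−y) ∂/∂y − z(x−y²−y) ∂/∂z on {x ≠ 0, y ≠ 0}. -/
theorem stmt_3 :
    ∀ x y z : ℂ, x ≠ 0 → y ≠ 0 →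
      fderiv ℂ (fun p : ℂ × ℂ × ℂ => (p.1 / p.2.1) * Complex.exp ((p.2.1 ^ 2 + p.2.1) / p.1))
        (x, y, z)
        (x * (x - 2 * y ^ 2 - y), y * (x - y ^ 2 - y), -(z * (x - y ^ 2 - y))) = 0 := by
  intro x y z hx hy
  have hH : HasFDerivAt H (fderiv ℂ H (x, y, z)) (x, y, z) :=
    (differentiableAt_H (p := (x, y, z)) hx hy).hasFDerivAt
  exact (hH.hasLineDerivAt (Y (x, y, z))).unique (hasLineDerivAt_H_Y hx hy)
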